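/- If M and N are projective R-modules, then the canonical map μ : M ⊗_R N → Hom_R(Hom_R(M, R), N), x ⊗ y ↦ (u ↦ u(x)·y), is injective. -/
import Mathlib

open TensorProduct

universe u

/-- The canonical map `μ : M ⊗[R] N → Hom_R(Hom_R(M, R), N)`,
`x ⊗ y ↦ (u ↦ u x • y)`. -/
noncomputable def muMap (R : Type u) [CommRing R] (M N : Type u) [AddCommGroup M] [Module R M]
    [AddCommGroup N] [Module R N] :
    (M ⊗[R] N) →ₗ[R] ((M →ₗ[R] R) →ₗ[R] N) :=
  TensorProduct.lift <| LinearMap.mk₂ R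
    (fun x y => (LinearMap.applyₗ x : (M →ₗ[R] R) →ₗ[R] R).smulRight y)
    (fun x x' y => by ext u; simp [add_smul])
    (fun c x y => by ext u; simp [mul_smul])
    (fun x y y' => by ext u; simp)
    (fun c x y => by ext u; show (u x) • (c • y) = c • ((u x) • y); rw [smul_comm])

theorem stmt12 (R : Type u) [CommRing R] (M N : Type u) [AddCommGroup M] [Module R M]
    [AddCommGroup N] [Module R N]
    (hM : Module.Projective R M) (hN : Module.Projective R N) :
    Function.Injective (muMap R M N) := by
  classical
  have key : ∀ t : M ⊗[R] N, muMap R M N t = 0 → t = 0 := by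
    obtain ⟨s, hs⟩ := hM.out
    set π := Finsupp.linearCombination R (id : M → M) with hπ
    have h1 : ∀ (t : M ⊗[R] N) (v : (M →₀ R) →ₗ[R] R),
        muMap R (M →₀ R) N (LinearMap.rTensor N s t) v = muMap R M N t (v ∘ₗ s) := by
      intro t v
      induction t using TensorProduct.induction_on with
      | zero => simp
      | tmul x y => simp [muMap]
      | add a b ha hb => simp [ha, hb]
    have coord : ∀ u : (M →₀ R) ⊗[R] N, ∀ a : M,
        TensorProduct.finsuppScalarLeft R N M u a
          = muMap R (M →₀ R) N u (Finsupp.lapply a) := by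
      intro u a
      induction u using TensorProduct.induction_on with
      | zero => simp
      | tmul f y => simp [muMap]
      | add b c hb hc => simp [hb, hc]
    intro t ht
    have h2 : muMap R (M →₀ R) N (LinearMap.rTensor N s t) = 0 := by
      ext v; rw [h1 t v, ht]; simp
    have h3 : LinearMap.rTensor N s t = 0 := by
      apply (TensorProduct.finsuppScalarLeft R N M).injective
      ext a
      rw [coord, h2]; simp
    have h4 : π ∘ₗ s = LinearMap.id := by
      ext x; exact hs x
    have h5 : t = LinearMap.rTensor N π (LinearMap.rTensor N s t) := by
      rw [← LinearMap.comp_apply, ← LinearMap.rTensor_comp, h4, LinearMap.rTensor_id,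
        LinearMap.id_apply]
    rw [h5, h3, map_zero]
  intro a b hab
  have := key (a - b) (by rw [map_sub, hab, sub_self])
  exact sub_eq_zero.mp this
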